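/- arXiv:2411.15324 — 2 statements merged into one kernel-verified Lean document; each statement's English description precedes it below -/
import Mathlib

section
/- Let γ be a geodesic in a Riemannian manifold and let 𝒲 be a Lagrangian subspace of normal Jacobi fields along γ. Then the set of 𝒲-focal times (times t at which the evaluation map J ↦ J(t) from 𝒲 to γ^⊥(t) has nontrivial kernel) is discrete in the domain of γ. -/
open scoped RealInnerProductSpace

/-- In a parallel orthonormal trivialization of the normal bundle (of rank `n - 1`)
along a geodesic in a smooth `n`-dimensional Riemannian manifold, a normal Jacobi
field is a pair `p = (J, J')` solving `J'' + R(t) J = 0` for the Jacobi operator `R`. -/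
def IsJacobiPair {d : ℕ} (R : ℝ → (EuclideanSpace ℝ (Fin d) →ₗ[ℝ] EuclideanSpace ℝ (Fin d)))
    (p : (ℝ → EuclideanSpace ℝ (Fin d)) × (ℝ → EuclideanSpace ℝ (Fin d))) : Prop :=
  (∀ t, HasDerivAt p.1 (p.2 t) t) ∧ (∀ t, HasDerivAt p.2 (-(R t (p.1 t))) t)


open Set

-- coordinate bound for linear maps on EuclideanSpace
lemma euclid_op_bound {d : ℕ} (T : EuclideanSpace ℝ (Fin d) →ₗ[ℝ] EuclideanSpace ℝ (Fin d))
    (x : EuclideanSpace ℝ (Fin d)) :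
    ‖T x‖ ≤ (∑ i, ‖T (EuclideanSpace.basisFun (Fin d) ℝ i)‖) * ‖x‖ := by
  set b := EuclideanSpace.basisFun (Fin d) ℝ
  have hx : x = ∑ i, b.repr x i • b i := (b.sum_repr x).symm
  have hTx : T x = ∑ i, b.repr x i • T (b i) := by
    conv_lhs => rw [hx]
    simp [map_sum, map_smul]
  calc ‖T x‖ = ‖∑ i, b.repr x i • T (b i)‖ := by rw [hTx]
    _ ≤ ∑ i, ‖b.repr x i • T (b i)‖ := norm_sum_le _ _
    _ ≤ ∑ i, ‖x‖ * ‖T (b i)‖ := by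
        refine Finset.sum_le_sum fun i _ => ?_
        rw [norm_smul]
        refine mul_le_mul_of_nonneg_right ?_ (norm_nonneg _)
        have h1 : b.repr x i = ⟪b i, x⟫ := b.repr_apply_apply x i
        rw [Real.norm_eq_abs, h1]
        calc |⟪b i, x⟫| ≤ ‖b i‖ * ‖x‖ := abs_real_inner_le_norm _ _
          _ = ‖x‖ := by rw [b.orthonormal.1 i, one_mul]
    _ = (∑ i, ‖T (b i)‖) * ‖x‖ := by rw [Finset.sum_mul]; simp [mul_comm]

lemma jacobiPair_eq_zero {d : ℕ}
    {R : ℝ → (EuclideanSpace ℝ (Fin d) →ₗ[ℝ] EuclideanSpace ℝ (Fin d))}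
    (hRcont : Continuous fun tv : ℝ × EuclideanSpace ℝ (Fin d) => R tv.1 tv.2)
    {p : (ℝ → EuclideanSpace ℝ (Fin d)) × (ℝ → EuclideanSpace ℝ (Fin d))}
    (hp : IsJacobiPair R p) {t₀ : ℝ} (h1 : p.1 t₀ = 0) (h2 : p.2 t₀ = 0) : p = 0 := by
  have hE : True := trivial
  have key : ∀ T : ℝ, p.1 T = 0 ∧ p.2 T = 0 := by
    intro T
    set a : ℝ := min t₀ T - 1 with ha
    set b : ℝ := max t₀ T + 1 with hb
    have hab : a < b := by
      have : min t₀ T ≤ max t₀ T := le_trans (min_le_left _ _) (le_max_left _ _)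
      linarith
    have ht₀ : t₀ ∈ Ioo a b := by
      constructor
      · have := min_le_left t₀ T; linarith
      · have := le_max_left t₀ T; linarith
    have hT : T ∈ Icc a b := by
      constructor
      · have := min_le_right t₀ T; linarith
      · have := le_max_right t₀ T; linarith
    -- clamp
    set c : ℝ → ℝ := fun t => max a (min t b) with hc
    have hcmem : ∀ t, c t ∈ Icc a b := fun t =>
      ⟨le_max_left _ _, max_le (le_of_lt hab) (min_le_right _ _)⟩
    have hceq : ∀ t ∈ Icc a b, c t = t := by
      intro t ht
      simp only [hc]
      rw [min_eq_left ht.2, max_eq_right ht.1]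
    -- bound on R over the interval
    have hgcont : Continuous fun t : ℝ => ∑ i, ‖R t (EuclideanSpace.basisFun (Fin d) ℝ i)‖ := by
      refine continuous_finset_sum _ fun i _ => ?_
      exact (hRcont.comp (continuous_id.prodMk continuous_const)).norm
    obtain ⟨Mb, hMb⟩ := (isCompact_Icc (a := a) (b := b)).exists_bound_of_continuousOn
      hgcont.continuousOn
    set K0 : ℝ := max 1 Mb with hK0
    have hK0pos : 0 ≤ K0 := le_trans zero_le_one (le_max_left _ _)
    have hRb : ∀ t (x : EuclideanSpace ℝ (Fin d)), ‖R (c t) x‖ ≤ K0 * ‖x‖ := by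
      intro t x
      calc ‖R (c t) x‖ ≤ (∑ i, ‖R (c t) (EuclideanSpace.basisFun (Fin d) ℝ i)‖) * ‖x‖ :=
            euclid_op_bound _ _
        _ ≤ K0 * ‖x‖ := by
            refine mul_le_mul_of_nonneg_right ?_ (norm_nonneg _)
            refine le_trans (le_trans (le_abs_self _) ?_) (le_max_right 1 Mb)
            exact hMb _ (hcmem t)
    set v : ℝ → EuclideanSpace ℝ (Fin d) × EuclideanSpace ℝ (Fin d) → EuclideanSpace ℝ (Fin d) × EuclideanSpace ℝ (Fin d) := fun t x => (x.2, -(R (c t) x.1)) with hv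
    have hlip : ∀ t, LipschitzWith ⟨K0, hK0pos⟩ (v t) := by
      intro t
      refine LipschitzWith.of_dist_le_mul fun x y => ?_
      rw [Prod.dist_eq]
      refine max_le ?_ ?_
      · calc dist x.2 y.2 ≤ dist x y := by rw [Prod.dist_eq]; exact le_max_right _ _
          _ ≤ K0 * dist x y := by
              nlinarith [dist_nonneg (x := x) (y := y), le_max_left 1 Mb]
      · rw [dist_eq_norm]
        have heq2 : -(R (c t) x.1) - -(R (c t) y.1) = R (c t) (y.1 - x.1) := by
          rw [map_sub]; abel
        rw [heq2]
        calc ‖R (c t) (y.1 - x.1)‖ ≤ K0 * ‖y.1 - x.1‖ := hRb _ _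
          _ ≤ K0 * dist x y := by
              refine mul_le_mul_of_nonneg_left ?_ hK0pos
              rw [← dist_eq_norm, dist_comm, Prod.dist_eq]
              exact le_max_left _ _
    set f : ℝ → EuclideanSpace ℝ (Fin d) × EuclideanSpace ℝ (Fin d) := fun t => (p.1 t, p.2 t) with hf
    have hfd : ∀ t, HasDerivAt f (p.2 t, -(R t (p.1 t))) t := fun t => (hp.1 t).prodMk (hp.2 t)
    have hlipOn : ∀ t, LipschitzOnWith ⟨K0, hK0pos⟩ (v t)
        (univ : Set (EuclideanSpace ℝ (Fin d) × EuclideanSpace ℝ (Fin d))) :=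
      fun t => (hlip t).lipschitzOnWith
    have heq : EqOn f (fun _ => (0 : EuclideanSpace ℝ (Fin d) × EuclideanSpace ℝ (Fin d))) (Icc a b) := by
      refine ODE_solution_unique_of_mem_Icc (v := v)
        (s := fun _ => (univ : Set (EuclideanSpace ℝ (Fin d) × EuclideanSpace ℝ (Fin d))))
        (f := f) (g := fun _ => 0)
        (fun t _ => hlipOn t) ht₀
        (fun t _ => (hfd t).continuousAt.continuousWithinAt) ?_ (fun _ _ => trivial)
        continuousOn_const ?_ (fun _ _ => trivial) ?_
      · intro t ht
        have : v t (f t) = (p.2 t, -(R t (p.1 t))) := by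
          simp only [hv, hf]
          rw [hceq t (Ioo_subset_Icc_self ht)]
        rw [this]
        exact hfd t
      · intro t ht
        have : v t ((fun _ => (0 : EuclideanSpace ℝ (Fin d) × EuclideanSpace ℝ (Fin d))) t) = 0 := by
          simp only [hv]
          simp
        rw [this]
        exact hasDerivAt_const _ _
      · simp only [hf]
        rw [h1, h2]
        rfl
    have := heq hT
    simp only [hf] at this
    exact ⟨congrArg Prod.fst this, congrArg Prod.snd this⟩
  refine Prod.ext ?_ ?_ <;> funext T
  · exact (key T).1
  · exact (key T).2

set_option maxHeartbeats 2000000 in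
theorem focal_discrete {d : ℕ} (hd : 0 < d)
    (R : ℝ → (EuclideanSpace ℝ (Fin d) →ₗ[ℝ] EuclideanSpace ℝ (Fin d)))
    (hRcont : Continuous fun tv : ℝ × EuclideanSpace ℝ (Fin d) => R tv.1 tv.2)
    (W : Submodule ℝ ((ℝ → EuclideanSpace ℝ (Fin d)) × (ℝ → EuclideanSpace ℝ (Fin d))))
    (hW : ∀ p ∈ W, IsJacobiPair R p)
    (hdim : Module.finrank ℝ W = d)
    (hLag : ∀ p ∈ W, ∀ q ∈ W, ∀ t : ℝ, ⟪p.1 t, q.2 t⟫ - ⟪q.1 t, p.2 t⟫ = 0)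
    (t₀ : ℝ) :
    ∃ ε > (0 : ℝ), ∀ t : ℝ,
      (∃ p ∈ W, p ≠ 0 ∧ p.1 t = 0) → |t - t₀| < ε → t = t₀ := by
  haveI : FiniteDimensional ℝ W := FiniteDimensional.of_finrank_pos (by rw [hdim]; exact hd)
  -- evaluation maps
  set ev : ℝ → (W →ₗ[ℝ] EuclideanSpace ℝ (Fin d)) :=
    fun t => { toFun := fun p => p.val.1 t, map_add' := fun _ _ => rfl,
               map_smul' := fun _ _ => rfl } with hev
  set der : W →ₗ[ℝ] EuclideanSpace ℝ (Fin d) :=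
    { toFun := fun p => p.val.2 t₀, map_add' := fun _ _ => rfl,
      map_smul' := fun _ _ => rfl } with hder
  set K : Submodule ℝ W := LinearMap.ker (ev t₀) with hK
  obtain ⟨C, hC⟩ := K.exists_isCompl
  set prK : W →ₗ[ℝ] W := K.subtype ∘ₗ K.projectionOnto C hC with hprK
  set prC : W →ₗ[ℝ] W := C.subtype ∘ₗ C.projectionOnto K hC.symm with hprC
  have hdecomp : ∀ p : W, prK p + prC p = p :=
    fun p => Submodule.projection_add_projection_eq_self hC p
  have hprK_memK : ∀ p : W, prK p ∈ K := fun p => (K.projectionOnto C hC p).2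
  have hprC_memC : ∀ p : W, prC p ∈ C := fun p => (C.projectionOnto K hC.symm p).2
  have hprK_left : ∀ p : W, p ∈ K → prK p = p := by
    intro p hp
    simp only [hprK, LinearMap.comp_apply]
    exact congrArg K.subtype (Submodule.linearProjOfIsCompl_apply_left hC ⟨p, hp⟩)
  have hprK_right : ∀ p : W, p ∈ C → prK p = 0 := by
    intro p hp
    simp only [hprK, LinearMap.comp_apply]
    rw [Submodule.projectionOnto_apply_of_mem_right hC hp]; rfl
  have hprC_left : ∀ p : W, p ∈ C → prC p = p := by
    intro p hp
    simp only [hprC, LinearMap.comp_apply]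
    exact congrArg C.subtype (Submodule.linearProjOfIsCompl_apply_left hC.symm ⟨p, hp⟩)
  have hprC_right : ∀ p : W, p ∈ K → prC p = 0 := by
    intro p hp
    simp only [hprC, LinearMap.comp_apply]
    rw [Submodule.projectionOnto_apply_of_mem_right hC.symm hp]; rfl
  -- the rescaled evaluation map
  set B : ℝ → (W →ₗ[ℝ] EuclideanSpace ℝ (Fin d)) :=
    fun t => (if t = t₀ then der else (t - t₀)⁻¹ • ev t) ∘ₗ prK + (ev t) ∘ₗ prC with hB
  -- B t₀ is injective
  have hBinj : Function.Injective (B t₀) := by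
    rw [← LinearMap.ker_eq_bot, LinearMap.ker_eq_bot']
    intro p hp
    simp only [hB, LinearMap.add_apply, LinearMap.comp_apply, if_pos rfl] at hp
    -- hp : der (prK p) + ev t₀ (prC p) = 0
    have hk1 : (prK p).val.1 t₀ = 0 := hprK_memK p
    have hc1 : (prC p).val.1 t₀ = -((prK p).val.2 t₀) := by
      have : der (prK p) + ev t₀ (prC p) = 0 := hp
      simp only [hder, hev, LinearMap.coe_mk, AddHom.coe_mk] at this
      linear_combination (norm := module) this
    have hlag := hLag _ (prK p).2 _ (prC p).2 t₀
    rw [hk1, hc1] at hlag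
    simp only [inner_zero_left, inner_neg_left, zero_sub, neg_neg] at hlag
    -- hlag : ⟪(prK p).2 t₀, (prK p).2 t₀⟫ = 0  (roughly)
    have hk2 : (prK p).val.2 t₀ = 0 := by
      rw [← inner_self_eq_zero (𝕜 := ℝ)]
      exact hlag
    have hcK : (prC p : W) ∈ K := by
      show ev t₀ (prC p) = 0
      show (prC p).val.1 t₀ = 0
      rw [hc1, hk2, neg_zero]
    have hc0 : prC p = 0 := by
      have h1 := hprK_right _ (hprC_memC p)
      have h2 := hprK_left _ hcK
      rw [h1] at h2; exact h2.symm
    have hk0 : prK p = 0 := by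
      have := jacobiPair_eq_zero hRcont (hW _ (prK p).2) hk1 hk2
      exact Subtype.ext this
    rw [← hdecomp p, hk0, hc0, add_zero]
  -- bases and determinant
  set bW : Module.Basis (Fin d) ℝ W := Module.finBasisOfFinrankEq ℝ W hdim with hbW
  set bE : Module.Basis (Fin d) ℝ (EuclideanSpace ℝ (Fin d)) :=
    (EuclideanSpace.basisFun (Fin d) ℝ).toBasis with hbE
  set M : ℝ → Matrix (Fin d) (Fin d) ℝ := fun t => LinearMap.toMatrix bW bE (B t) with hM
  have hdet_ne : (M t₀).det ≠ 0 := by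
    have hbij : Function.Bijective (B t₀) := by
      refine ⟨hBinj, ?_⟩
      rw [← LinearMap.injective_iff_surjective_of_finrank_eq_finrank (by
        rw [hdim]; simp)]
      exact hBinj
    have := (LinearEquiv.ofBijective (B t₀) hbij).isUnit_det bW bE
    have h2 : LinearMap.toMatrix bW bE ((LinearEquiv.ofBijective (B t₀) hbij) :
        W →ₗ[ℝ] EuclideanSpace ℝ (Fin d)) = M t₀ := rfl
    rw [h2] at this
    exact this.ne_zero
  -- continuity of the matrix at t₀
  have hMcont : ContinuousAt M t₀ := by
    refine continuousAt_pi' fun i => continuousAt_pi' fun j => ?_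
    have hMentry : ∀ t, M t i j = (B t (bW j)) i := by
      intro t
      show LinearMap.toMatrix bW bE (B t) i j = _
      rw [LinearMap.toMatrix_apply, hbE, OrthonormalBasis.coe_toBasis_repr_apply,
        EuclideanSpace.basisFun_repr]
    have hBv : ContinuousAt (fun t => B t (bW j)) t₀ := by
      simp only [hB, LinearMap.add_apply, LinearMap.comp_apply]
      refine ContinuousAt.add ?_ ?_
      · -- slope part
        have hmem := hprK_memK (bW j)
        have hval : ∀ t, (if t = t₀ then der else (t - t₀)⁻¹ • ev t) (prK (bW j)) =
            if t = t₀ then (prK (bW j)).val.2 t₀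
            else (t - t₀)⁻¹ • (prK (bW j)).val.1 t := by
          intro t
          by_cases h : t = t₀ <;> simp [h, hder, hev]
        simp only [hval]
        set q := (prK (bW j) : W) with hq
        have hq1 : q.val.1 t₀ = 0 := hmem
        have hd : HasDerivAt (fun t => q.val.1 t) (q.val.2 t₀) t₀ :=
          (hW _ q.2).1 t₀
        rw [hasDerivAt_iff_tendsto_slope] at hd
        have hslope : ∀ t ≠ t₀, slope (fun t => q.val.1 t) t₀ t =
            (t - t₀)⁻¹ • q.val.1 t := by
          intro t ht
          simp only [slope_def_module, hq1, sub_zero]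
        rw [ContinuousAt, ← nhdsNE_sup_pure t₀, Filter.tendsto_sup]
        constructor
        · simp only [if_pos rfl]
          refine hd.congr' ?_
          filter_upwards [self_mem_nhdsWithin] with t ht
          have ht' : t ≠ t₀ := ht
          rw [hslope t ht', if_neg ht']
        · simp only [if_pos rfl]
          rw [Filter.tendsto_pure_left]
          intro s hs
          simpa using mem_of_mem_nhds hs
      · -- regular part
        have : ContinuousAt (fun t => (prC (bW j)).val.1 t) t₀ :=
          ((hW _ (prC (bW j)).2).1 t₀).continuousAt
        exact this
    have : ContinuousAt (fun t => (B t (bW j)) i) t₀ :=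
      ((EuclideanSpace.proj i).continuous.continuousAt).comp hBv
    simpa only [← hMentry] using this
  have hdetcont : ContinuousAt (fun t => (M t).det) t₀ :=
    (Continuous.matrix_det continuous_id).continuousAt.comp hMcont
  have hev_ne : ∀ᶠ t in nhds t₀, (M t).det ≠ 0 := hdetcont.eventually_ne hdet_ne
  rw [Metric.eventually_nhds_iff] at hev_ne
  obtain ⟨ε, hε, hball⟩ := hev_ne
  refine ⟨ε, hε, ?_⟩
  rintro t ⟨p, hpW, hp0, hpt⟩ hlt
  by_contra hne
  have htne : t ≠ t₀ := hne
  have hdet : (M t).det ≠ 0 := hball (by rwa [Real.dist_eq])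
  have hBtinj : Function.Injective (B t) := by
    have hunit : IsUnit (M t).det := isUnit_iff_ne_zero.mpr hdet
    have := LinearEquiv.ofIsUnitDet hunit
    have hco : ((LinearEquiv.ofIsUnitDet hunit : W ≃ₗ[ℝ] _) :
        W →ₗ[ℝ] EuclideanSpace ℝ (Fin d)) = B t := LinearEquiv.coe_ofIsUnitDet hunit
    rw [← hco]
    exact (LinearEquiv.ofIsUnitDet hunit).injective
  set pw : W := ⟨p, hpW⟩ with hpw
  set p' : W := (t - t₀) • prK pw + prC pw with hp'
  have hp'ne : p' ≠ 0 := by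
    intro h0
    have hKel : ((t - t₀) • prK pw : W) ∈ K := K.smul_mem _ (hprK_memK pw)
    have hCel : (prC pw : W) ∈ C := hprC_memC pw
    have hsum : ((t - t₀) • prK pw : W) + prC pw = 0 := h0
    have hCK : (prC pw : W) ∈ K := by
      have : (prC pw : W) = -((t - t₀) • prK pw) := by linear_combination (norm := module) hsum
      rw [this]; exact K.neg_mem hKel
    have hc0 : prC pw = 0 := by
      have h1 := hprK_right _ hCel
      have h2 := hprK_left _ hCK
      rw [h1] at h2; exact h2.symm
    have hk0 : (t - t₀) • prK pw = 0 := by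
      rw [hc0, add_zero] at hsum; exact hsum
    have hk0' : prK pw = 0 := by
      have hts : t - t₀ ≠ 0 := sub_ne_zero.mpr htne
      exact (smul_eq_zero.mp hk0).resolve_left hts
    have : pw = 0 := by rw [← hdecomp pw, hk0', hc0, add_zero]
    exact hp0 (Subtype.ext_iff.mp this)
  have hBp' : B t p' = 0 := by
    simp only [hB, LinearMap.add_apply, LinearMap.comp_apply, if_neg htne]
    have h1 : prK p' = (t - t₀) • prK pw := by
      simp only [hp', map_add, map_smul]
      rw [hprK_left _ (hprK_memK pw), hprK_right _ (hprC_memC pw), add_zero]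
    have h2 : prC p' = prC pw := by
      simp only [hp', map_add, map_smul]
      rw [hprC_right _ (hprK_memK pw), hprC_left _ (hprC_memC pw), smul_zero, zero_add]
    rw [h1, h2]
    rw [LinearMap.smul_apply, map_smul, smul_smul,
      inv_mul_cancel₀ (sub_ne_zero.mpr htne), one_smul]
    have : ev t (prK pw) + ev t (prC pw) = ev t pw := by rw [← map_add, hdecomp]
    rw [this]
    exact hpt
  exact hp'ne (hBtinj (by rw [hBp', map_zero]))

/-- For a Lagrangian subspace `W` of normal Jacobi fields along a geodesic, the set of
`W`-focal times (times at which some nonzero `J ∈ W` vanishes) is discrete: every real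
number has a neighborhood containing at most one focal time. -/
theorem stmt8 (n : ℕ) (hn : 1 ≤ n)
    (R : ℝ → (EuclideanSpace ℝ (Fin (n - 1)) →ₗ[ℝ] EuclideanSpace ℝ (Fin (n - 1))))
    (hRcont : Continuous fun tv : ℝ × EuclideanSpace ℝ (Fin (n - 1)) => R tv.1 tv.2)
    (hRsym : ∀ (t : ℝ) (v w : EuclideanSpace ℝ (Fin (n - 1))), ⟪R t v, w⟫ = ⟪v, R t w⟫)
    (W : Submodule ℝ ((ℝ → EuclideanSpace ℝ (Fin (n - 1))) × (ℝ → EuclideanSpace ℝ (Fin (n - 1)))))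
    (hW : ∀ p ∈ W, IsJacobiPair R p)
    (hdim : Module.finrank ℝ W = n - 1)
    (hLag : ∀ p ∈ W, ∀ q ∈ W, ∀ t : ℝ, ⟪p.1 t, q.2 t⟫ - ⟪q.1 t, p.2 t⟫ = 0) :
    ∀ t₀ : ℝ, ∃ ε > (0 : ℝ), ∀ t : ℝ,
      (∃ p ∈ W, p ≠ 0 ∧ p.1 t = 0) → |t - t₀| < ε → t = t₀ := by
  intro t₀
  rcases Nat.eq_zero_or_pos (n - 1) with h0 | hpos
  · refine ⟨1, one_pos, ?_⟩
    rintro t ⟨p, hpW, hp0, -⟩ -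
    exfalso
    apply hp0
    haveI : IsEmpty (Fin (n - 1)) := by rw [h0]; infer_instance
    haveI : Subsingleton (EuclideanSpace ℝ (Fin (n - 1))) := by infer_instance
    refine Prod.ext ?_ ?_ <;> funext s <;> exact Subsingleton.elim _ _
  · exact focal_discrete hpos R hRcont W hW hdim hLag t₀
end

section
/- Let L ⊂ ℝⁿ be an l-dimensional submanifold that is the graph of a C^{k,α} map F : O → ℝ^{n−l} on an open set O ⊂ ℝ^l, with k ≥ 1 and 0 ≤ α ≤ 1. If the second fundamental form of L is of class C^{k−1,α}, then F is of class C^{k+1,α}; i.e., L is a C^{k+1,α} submanifold. -/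
/-!
Since `II(v, w)` is the normal part of `(0, D²F(v, w))`, the difference `(0, D²F(v, w)) - II(v, w)`
is tangent to the graph, i.e. of the form `(u, DF u)`; comparing components gives
`D²F(v, w) = II(v, w)₂ - DF (II(v, w)₁)`. The right-hand side is built from `DF` and `II`, both of
class `C^{k-1,α}`, by linear maps and the evaluation pairing, and `C^{k-1,α}` is stable under these
operations (for the pairing by induction on `k` through the Leibniz rule). So `D²F` is
`C^{k-1,α}`, that is, `F` is `C^{k+1,α}`.
-/

open scoped RealInnerProductSpace

noncomputable section

/-- The ambient Euclidean space `ℝⁿ = ℝˡ × ℝ^{n-l}` (with the ℓ² product inner product). -/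
abbrev Amb (l m : ℕ) : Type :=
  WithLp 2 (EuclideanSpace ℝ (Fin l) × EuclideanSpace ℝ (Fin m))

def toAmb {l m : ℕ} (x : EuclideanSpace ℝ (Fin l)) (y : EuclideanSpace ℝ (Fin m)) :
    Amb l m :=
  (WithLp.equiv 2 (EuclideanSpace ℝ (Fin l) × EuclideanSpace ℝ (Fin m))).symm (x, y)

/-- The tangent space of the graph of `F` at the point `(x, F x)`. -/
def graphTangent {l m : ℕ} (F : EuclideanSpace ℝ (Fin l) → EuclideanSpace ℝ (Fin m))
    (x : EuclideanSpace ℝ (Fin l)) : Submodule ℝ (Amb l m) :=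
  LinearMap.range
    ((WithLp.linearEquiv 2 ℝ
        (EuclideanSpace ℝ (Fin l) × EuclideanSpace ℝ (Fin m))).symm.toLinearMap.comp
      (LinearMap.prod (LinearMap.id) ((fderiv ℝ F x).toLinearMap)))

/-- The second fundamental form of the graph of `F` at `(x, F x)`, evaluated on the
tangent vectors with `ℝˡ`-coordinates `v` and `w`: the orthogonal projection of
`(0, D²F_x(v,w))` onto the normal space of the graph. -/
def secondFF {l m : ℕ} (F : EuclideanSpace ℝ (Fin l) → EuclideanSpace ℝ (Fin m))
    (x v w : EuclideanSpace ℝ (Fin l)) : Amb l m :=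
  (Submodule.orthogonalProjectionOnto ((graphTangent F x)ᗮ)
    (toAmb 0 (fderiv ℝ (fderiv ℝ F) x v w)) : Amb l m)

/-- `f` is of class `C^{k,α}` on `s`: it is `C^k` on `s` and its `k`-th derivative is
locally `α`-Hölder on `s`. -/
def HolderRegOn (k : ℕ) (α : NNReal) {E F : Type*} [NormedAddCommGroup E] [NormedSpace ℝ E]
    [NormedAddCommGroup F] [NormedSpace ℝ F] (f : E → F) (s : Set E) : Prop :=
  ContDiffOn ℝ k f s ∧
    ∀ x ∈ s, ∃ u ∈ nhdsWithin x s, ∃ C : NNReal,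
      HolderOnWith C α (iteratedFDerivWithin ℝ k f s) u

open Set Filter Topology
open scoped NNReal

section LocallyHolder

variable {X Y Z : Type*} [PseudoEMetricSpace X] [PseudoEMetricSpace Y] [PseudoEMetricSpace Z]
  {α : ℝ≥0} {f g : X → Y} {s : Set X}

def LocallyHolderOn (α : ℝ≥0) (f : X → Y) (s : Set X) : Prop :=
  ∀ x ∈ s, ∃ u ∈ 𝓝[s] x, ∃ C : ℝ≥0, HolderOnWith C α f u

theorem locallyHolderOn_congr (h : EqOn f g s) :
    LocallyHolderOn α f s ↔ LocallyHolderOn α g s := by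
  suffices ∀ {f g : X → Y}, EqOn f g s → LocallyHolderOn α f s → LocallyHolderOn α g s from
    ⟨this h, this h.symm⟩
  intro f g h hf x hx
  obtain ⟨u, hu, C, hC⟩ := hf x hx
  refine ⟨u ∩ s, inter_mem hu self_mem_nhdsWithin, C, fun y hy z hz => ?_⟩
  rw [← h hy.2, ← h hz.2]
  exact hC y hy.1 z hz.1

theorem locallyHolderOn_const (c : Y) : LocallyHolderOn α (fun _ : X => c) s :=
  fun _ _ => ⟨s, self_mem_nhdsWithin, 0, HolderWith.const.holderOnWith s⟩

theorem LipschitzWith.comp_locallyHolderOn {K : ℝ≥0} {g : Y → Z} (hg : LipschitzWith K g)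
    (hf : LocallyHolderOn α f s) : LocallyHolderOn α (g ∘ f) s := fun x hx => by
  obtain ⟨u, hu, C, hC⟩ := hf x hx
  exact ⟨u, hu, K * C, by simpa using hg.holderWith.comp_holderOnWith hC⟩

theorem Isometry.locallyHolderOn_comp_iff {g : Y → Z} (hg : Isometry g) :
    LocallyHolderOn α (g ∘ f) s ↔ LocallyHolderOn α f s := by
  simp only [LocallyHolderOn, HolderOnWith, Function.comp_apply, hg.edist_eq]

end LocallyHolder

theorem LocallyHolderOn.add {X Y : Type*} [PseudoEMetricSpace X] [SeminormedAddCommGroup Y]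
    {α : ℝ≥0} {f g : X → Y} {s : Set X}
    (hf : LocallyHolderOn α f s) (hg : LocallyHolderOn α g s) :
    LocallyHolderOn α (fun x => f x + g x) s := fun x hx => by
  obtain ⟨u, hu, C, hC⟩ := hf x hx
  obtain ⟨v, hv, D, hD⟩ := hg x hx
  refine ⟨u ∩ v, inter_mem hu hv, C + D, ?_⟩
  intro y hy z hz
  calc edist (f y + g y) (f z + g z) ≤ edist (f y) (f z) + edist (g y) (g z) :=
        edist_add_add_le _ _ _ _
    _ ≤ C * edist y z ^ (α : ℝ) + D * edist y z ^ (α : ℝ) :=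
        add_le_add (hC y hy.1 z hz.1) (hD y hy.2 z hz.2)
    _ = ↑(C + D) * edist y z ^ (α : ℝ) := by rw [ENNReal.coe_add, add_mul]

theorem ContDiffOn.locallyHolderOn {E F : Type*} [NormedAddCommGroup E] [NormedSpace ℝ E]
    [NormedAddCommGroup F] [NormedSpace ℝ F] {f : E → F} {s : Set E} {α : ℝ≥0}
    (hf : ContDiffOn ℝ 1 f s) (hs : IsOpen s) (hα : α ≤ 1) : LocallyHolderOn α f s := by
  intro x hx
  obtain ⟨K, t, ht, hK⟩ := (hf.contDiffAt (hs.mem_nhds hx)).exists_lipschitzOnWith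
  have hdiam : ∀ y ∈ t ∩ Metric.ball x 2⁻¹, ∀ z ∈ t ∩ Metric.ball x 2⁻¹,
      edist y z ≤ (1 : ℝ≥0) := by
    intro y hy z hz
    have htri := dist_triangle_right y z x
    rw [edist_dist, ENNReal.coe_one, ENNReal.ofReal_le_one]
    linarith [Metric.mem_ball.mp hy.2, Metric.mem_ball.mp hz.2]
  exact ⟨t ∩ Metric.ball x 2⁻¹,
    nhdsWithin_le_nhds (inter_mem ht (Metric.ball_mem_nhds x (by norm_num))), _,
    (hK.mono inter_subset_left).holderOnWith.of_le hdiam hα⟩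

section Bilinear

variable {X F G H : Type*} [PseudoMetricSpace X] [SeminormedAddCommGroup F]
  [SeminormedAddCommGroup G] [SeminormedAddCommGroup H] [NormedSpace ℝ F] [NormedSpace ℝ G]
  [NormedSpace ℝ H] (B : F →L[ℝ] G →L[ℝ] H) {α : ℝ≥0} {f : X → F} {g : X → G}

theorem ContinuousLinearMap.holderOnWith_of_bilinear {u : Set X} {Cf Cg Mf Mg : ℝ≥0}
    (hf : HolderOnWith Cf α f u) (hg : HolderOnWith Cg α g u)
    (hfM : ∀ y ∈ u, ‖f y‖₊ ≤ Mf) (hgM : ∀ y ∈ u, ‖g y‖₊ ≤ Mg) :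
    HolderOnWith (‖B‖₊ * (Mf * Cg + Cf * Mg)) α (fun y => B (f y) (g y)) u := by
  intro y hy z hz
  have hsplit : B (f y) (g y) - B (f z) (g z) = B (f y) (g y - g z) + B (f y - f z) (g z) := by
    simp only [map_sub, sub_apply]
    abel
  have hfyz : ‖f y - f z‖ ≤ Cf * dist y z ^ (α : ℝ) := by
    simpa only [dist_eq_norm] using hf.dist_le hy hz
  have hgyz : ‖g y - g z‖ ≤ Cg * dist y z ^ (α : ℝ) := by
    simpa only [dist_eq_norm] using hg.dist_le hy hz
  rw [edist_nndist, edist_nndist, ← ENNReal.coe_rpow_of_nonneg _ α.coe_nonneg,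
    ← ENNReal.coe_mul, ENNReal.coe_le_coe, ← NNReal.coe_le_coe]
  push_cast
  calc dist (B (f y) (g y)) (B (f z) (g z))
      = ‖B (f y) (g y - g z) + B (f y - f z) (g z)‖ := by rw [dist_eq_norm, hsplit]
    _ ≤ ‖B‖ * ‖f y‖ * ‖g y - g z‖ + ‖B‖ * ‖f y - f z‖ * ‖g z‖ :=
        (norm_add_le _ _).trans (add_le_add (B.le_opNorm₂ _ _) (B.le_opNorm₂ _ _))
    _ ≤ ‖B‖ * Mf * (Cg * dist y z ^ (α : ℝ)) + ‖B‖ * (Cf * dist y z ^ (α : ℝ)) * Mg := by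
        gcongr
        · exact_mod_cast hfM y hy
        · exact_mod_cast hgM z hz
    _ = ‖B‖ * (Mf * Cg + Cf * Mg) * dist y z ^ (α : ℝ) := by ring

theorem ContinuousLinearMap.locallyHolderOn_of_bilinear {s : Set X} (hfc : ContinuousOn f s)
    (hgc : ContinuousOn g s) (hf : LocallyHolderOn α f s) (hg : LocallyHolderOn α g s) :
    LocallyHolderOn α (fun y => B (f y) (g y)) s := by
  intro x hx
  obtain ⟨u, hu, Cf, hCf⟩ := hf x hx
  obtain ⟨v, hv, Cg, hCg⟩ := hg x hx
  have hfM : ∀ᶠ y in 𝓝[s] x, ‖f y‖₊ ≤ ‖f x‖₊ + 1 :=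
    (hfc x hx).nnnorm.eventually (eventually_le_nhds (lt_add_one _))
  have hgM : ∀ᶠ y in 𝓝[s] x, ‖g y‖₊ ≤ ‖g x‖₊ + 1 :=
    (hgc x hx).nnnorm.eventually (eventually_le_nhds (lt_add_one _))
  exact ⟨_, inter_mem (inter_mem hu hv) (hfM.and hgM), _, B.holderOnWith_of_bilinear
    (hCf.mono fun y hy => hy.1.1) (hCg.mono fun y hy => hy.1.2) (fun y hy => hy.2.1)
    fun y hy => hy.2.2⟩

end Bilinear

section HolderReg

variable {E F G : Type*} [NormedAddCommGroup E] [NormedSpace ℝ E] [NormedAddCommGroup F]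
  [NormedSpace ℝ F] [NormedAddCommGroup G] [NormedSpace ℝ G] {n : ℕ} {α : ℝ≥0} {f g : E → F}
  {O : Set E}

theorem holderRegOn_iff :
    HolderRegOn n α f O ↔
      ContDiffOn ℝ n f O ∧ LocallyHolderOn α (iteratedFDerivWithin ℝ n f O) O :=
  Iff.rfl

theorem holderRegOn_iff_iteratedFDeriv (hO : IsOpen O) :
    HolderRegOn n α f O ↔ ContDiffOn ℝ n f O ∧ LocallyHolderOn α (iteratedFDeriv ℝ n f) O :=
  and_congr_right fun _ => locallyHolderOn_congr (iteratedFDerivWithin_of_isOpen n hO)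

theorem holderRegOn_zero_iff : HolderRegOn 0 α f O ↔ ContinuousOn f O ∧ LocallyHolderOn α f O := by
  rw [holderRegOn_iff, iteratedFDerivWithin_zero_eq_comp,
    (continuousMultilinearCurryFin0 ℝ E F).symm.isometry.locallyHolderOn_comp_iff,
    Nat.cast_zero, contDiffOn_zero]

theorem holderRegOn_succ_iff (hO : IsOpen O) :
    HolderRegOn (n + 1) α f O ↔ DifferentiableOn ℝ f O ∧ HolderRegOn n α (fderiv ℝ f) O := by
  have hcurry : iteratedFDeriv ℝ (n + 1) f =
      (continuousMultilinearCurryRightEquiv' ℝ n E F).symm ∘ iteratedFDeriv ℝ n (fderiv ℝ f) :=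
    funext fun _ => iteratedFDeriv_succ_eq_comp_right
  rw [holderRegOn_iff_iteratedFDeriv hO, holderRegOn_iff_iteratedFDeriv hO, hcurry,
    (continuousMultilinearCurryRightEquiv' ℝ n E F).symm.isometry.locallyHolderOn_comp_iff,
    Nat.cast_succ, contDiffOn_succ_iff_fderiv_of_isOpen hO]
  simp only [WithTop.natCast_ne_top, IsEmpty.forall_iff, true_and, and_assoc]

theorem HolderRegOn.of_succ (hO : IsOpen O) (hα : α ≤ 1) (hf : HolderRegOn (n + 1) α f O) :
    HolderRegOn n α f O :=
  ⟨hf.1.of_le (by norm_cast; omega),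
    ContDiffOn.locallyHolderOn (fun x hx => (hf.1 x hx).iteratedFDerivWithin_right hO.uniqueDiffOn
      (by norm_cast; omega) hx) hO hα⟩

theorem HolderRegOn.congr (hg : HolderRegOn n α g O) (h : EqOn f g O) : HolderRegOn n α f O :=
  ⟨hg.1.congr h, (locallyHolderOn_congr fun _ hx => iteratedFDerivWithin_congr h hx n).2 hg.2⟩

theorem HolderRegOn.clm_comp (hO : IsOpen O) (L : F →L[ℝ] G) (hf : HolderRegOn n α f O) :
    HolderRegOn n α (fun x => L (f x)) O := by
  rw [holderRegOn_iff_iteratedFDeriv hO] at hf ⊢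
  refine ⟨hf.1.continuousLinearMap_comp L, (locallyHolderOn_congr fun x hx => ?_).2
    ((L.compContinuousMultilinearMapL ℝ _ F G).lipschitz.comp_locallyHolderOn hf.2)⟩
  exact L.iteratedFDeriv_comp_left (hf.1.contDiffAt (hO.mem_nhds hx)) le_rfl

theorem HolderRegOn.add (hO : IsOpen O) (hf : HolderRegOn n α f O) (hg : HolderRegOn n α g O) :
    HolderRegOn n α (fun x => f x + g x) O := by
  refine ⟨hf.1.add hg.1, (locallyHolderOn_congr fun x hx => ?_).2 (LocallyHolderOn.add hf.2 hg.2)⟩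
  exact fun_iteratedFDerivWithin_add_apply (hf.1 x hx) (hg.1 x hx) hO.uniqueDiffOn hx

theorem HolderRegOn.sub (hO : IsOpen O) (hf : HolderRegOn n α f O) (hg : HolderRegOn n α g O) :
    HolderRegOn n α (fun x => f x - g x) O := by
  simpa [sub_eq_add_neg] using hf.add hO (hg.clm_comp hO (-ContinuousLinearMap.id ℝ F))

theorem holderRegOn_zero (hO : IsOpen O) : HolderRegOn n α (fun _ : E => (0 : F)) O := by
  rw [holderRegOn_iff_iteratedFDeriv hO, iteratedFDeriv_fun_zero]
  exact ⟨contDiffOn_const, locallyHolderOn_const 0⟩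

theorem HolderRegOn.sum {ι : Type*} (hO : IsOpen O) (s : Finset ι) {f : ι → E → F}
    (hf : ∀ i ∈ s, HolderRegOn n α (f i) O) : HolderRegOn n α (fun x => ∑ i ∈ s, f i x) O := by
  classical
  induction s using Finset.induction with
  | empty => simpa using holderRegOn_zero hO
  | insert a s ha ih =>
    simp only [Finset.sum_insert ha]
    exact (hf a (Finset.mem_insert_self a s)).add hO
      (ih fun i hi => hf i (Finset.mem_insert_of_mem hi))

theorem HolderRegOn.of_forall_apply [FiniteDimensional ℝ F] (hO : IsOpen O) {f : E → F →L[ℝ] G}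
    (hf : ∀ v, HolderRegOn n α (fun x => f x v) O) : HolderRegOn n α f O := by
  let b := Module.finBasis ℝ F
  have hexpand : f = fun x => ∑ i, ContinuousLinearMap.smulRightL ℝ F G
      (b.coord i).toContinuousLinearMap (f x (b i)) := funext fun x => by
    refine ContinuousLinearMap.coe_injective (b.ext fun j => ?_)
    simp [b.coord_apply, Finsupp.single_apply]
  rw [hexpand]
  exact HolderRegOn.sum hO _ fun i _ => (hf (b i)).clm_comp hO _

end HolderReg

section HolderRegBilinear

universe u

-- A single universe, so that the induction below can pass to spaces of linear maps.
variable {E F G H : Type u} [NormedAddCommGroup E] [NormedSpace ℝ E] [NormedAddCommGroup F]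
  [NormedSpace ℝ F] [NormedAddCommGroup G] [NormedSpace ℝ G] [NormedAddCommGroup H]
  [NormedSpace ℝ H] {n : ℕ} {α : ℝ≥0} {O : Set E}

theorem ContinuousLinearMap.holderRegOn_of_bilinear (hO : IsOpen O) (hα : α ≤ 1)
    (B : F →L[ℝ] G →L[ℝ] H) {f : E → F} {g : E → G} (hf : HolderRegOn n α f O)
    (hg : HolderRegOn n α g O) :
    HolderRegOn n α (fun x => B (f x) (g x)) O := by
  induction n generalizing F G H with
  | zero =>
    rw [holderRegOn_zero_iff] at hf hg ⊢
    exact ⟨(B.continuous.comp_continuousOn hf.1).clm_apply hg.1,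
      B.locallyHolderOn_of_bilinear hf.1 hg.1 hf.2 hg.2⟩
  | succ n ih =>
    have hfn := hf.of_succ hO hα
    have hgn := hg.of_succ hO hα
    rw [holderRegOn_succ_iff hO] at hf hg ⊢
    refine ⟨fun x hx => (B.hasFDerivWithinAt_of_bilinear (hf.1 x hx).hasFDerivWithinAt
      (hg.1 x hx).hasFDerivWithinAt).differentiableWithinAt, ?_⟩
    -- Leibniz rule: `D (B f g) = B f (D g) + B (D f) g`.
    refine ((ih (B.precompR E) hfn hg.2).add hO (ih (B.precompL E) hf.2 hgn)).congr fun x hx => ?_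
    exact B.fderiv_of_bilinear (hf.1.differentiableAt (hO.mem_nhds hx))
      (hg.1.differentiableAt (hO.mem_nhds hx))

theorem HolderRegOn.clm_apply (hO : IsOpen O) (hα : α ≤ 1) {f : E → F →L[ℝ] G} {g : E → F}
    (hf : HolderRegOn n α f O) (hg : HolderRegOn n α g O) :
    HolderRegOn n α (fun x => f x (g x)) O :=
  (ContinuousLinearMap.id ℝ (F →L[ℝ] G)).holderRegOn_of_bilinear hO hα hf hg

end HolderRegBilinear

theorem fderiv_fderiv_apply_eq_secondFF {l m : ℕ}
    (F : EuclideanSpace ℝ (Fin l) → EuclideanSpace ℝ (Fin m)) (x v w : EuclideanSpace ℝ (Fin l)) :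
    fderiv ℝ (fderiv ℝ F) x v w =
      (secondFF F x v w).snd - fderiv ℝ F x (secondFF F x v w).fst := by
  set T := graphTangent F x
  set a : Amb l m := toAmb 0 (fderiv ℝ (fderiv ℝ F) x v w)
  have hT : a - secondFF F x v w ∈ T := by
    have h := Submodule.sub_starProjection_mem_orthogonal (K := Tᗮ) a
    rwa [Submodule.orthogonal_orthogonal] at h
  obtain ⟨u, hu⟩ := hT
  have hfst : -(secondFF F x v w).fst = u := by
    simpa [a, toAmb] using congrArg WithLp.fst hu.symm
  have hsnd : fderiv ℝ (fderiv ℝ F) x v w - (secondFF F x v w).snd = fderiv ℝ F x u := by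
    simpa [a, toAmb] using congrArg WithLp.snd hu.symm
  rw [← hfst, map_neg] at hsnd
  linear_combination (norm := module) hsnd

/-- If an `l`-dimensional graph submanifold `L = graph F ⊂ ℝⁿ` is `C^{k,α}` (`k ≥ 1`,
`0 ≤ α ≤ 1`) and its second fundamental form is `C^{k-1,α}`, then `L` is `C^{k+1,α}`. -/
theorem stmt9 {l m : ℕ} (k : ℕ) (hk : 1 ≤ k) (α : NNReal) (hα : α ≤ 1)
    (O : Set (EuclideanSpace ℝ (Fin l))) (hO : IsOpen O)
    (F : EuclideanSpace ℝ (Fin l) → EuclideanSpace ℝ (Fin m))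
    (hF : HolderRegOn k α F O)
    (hF2 : ∀ x ∈ O, DifferentiableAt ℝ (fderiv ℝ F) x)
    (hII : ∀ v w : EuclideanSpace ℝ (Fin l),
      HolderRegOn (k - 1) α (fun x => secondFF F x v w) O) :
    HolderRegOn (k + 1) α F O := by
  obtain ⟨k, rfl⟩ := Nat.exists_eq_add_of_le' hk
  rw [Nat.add_sub_cancel] at hII
  obtain ⟨hFdiff, hDF⟩ := (holderRegOn_succ_iff hO).mp hF
  have hD2F : HolderRegOn k α (fderiv ℝ (fderiv ℝ F)) O :=
    HolderRegOn.of_forall_apply hO fun v => HolderRegOn.of_forall_apply hO fun w => by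
      simp only [fderiv_fderiv_apply_eq_secondFF]
      exact ((hII v w).clm_comp hO (WithLp.sndL 2 ℝ _ _)).sub hO
        (hDF.clm_apply hO hα ((hII v w).clm_comp hO (WithLp.fstL 2 ℝ _ _)))
  exact (holderRegOn_succ_iff hO).mpr ⟨hFdiff, (holderRegOn_succ_iff hO).mpr
    ⟨fun x hx => (hF2 x hx).differentiableWithinAt, hD2F⟩⟩
end
end
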